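/- (Proposition: LFI 1.2.) Let ℓ ≥ 0. Suppose L_{(2N)a}(q), N = 0,1,…,ℓ, are smooth generalized Killing vectors of Γ satisfying (L_{(2k)b}Q^b)_{,a} = −2(2k+1)(k+1) L_{(2k+2)a} for k = 0,…,ℓ−1 (when ℓ > 0), and s₀ = L_{(2ℓ)a}Q^a is constant. Then I = Σ_{N=0}^{ℓ} t^{2N} L_{(2N)a} q̇^a + s₀ t^{2ℓ+1}/(2ℓ+1) + Σ_{N=0}^{ℓ−1} (L_{(2N)a}Q^a) t^{2N+1}/(2N+1) is a first integral of q̈^a = −Γ^a_{bc}q̇^bq̇^c − Q^a. -/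

import Mathlib

/-! Along a solution the Killing equation cancels the quadratic part of `d/dt (L_a q̇^a)`, leaving
`-L_a Q^a`, while the compatibility condition turns `d/dt (L_{(2k)b} Q^b)` into
`-2(2k+1)(k+1) L_{(2k+2)a} q̇^a`. Grouping `t^{2N+2} L_{(2N+2)a} q̇^a` with
`t^{2N+1} L_{(2N)b} Q^b / (2N+1)`, the derivative of each group is
`t^{2N} L_{(2N)b} Q^b - t^{2N+2} L_{(2N+2)b} Q^b`, so `dI/dt` telescopes, and the `s₀` term
cancels the last boundary term. -/

noncomputable section
open scoped BigOperators

/-- Points of the configuration space `ℝ^D`. -/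
abbrev Vec (D : ℕ) := Fin D → ℝ

/-- Connection coefficients: `Γ q a b c = Γ^a_{bc}(q)`. -/
abbrev Conn (D : ℕ) := Vec D → Fin D → Fin D → Fin D → ℝ

/-- Partial derivative `∂f/∂q^j`. -/
def pd {D : ℕ} (j : Fin D) (f : Vec D → ℝ) (q : Vec D) : ℝ :=
  fderiv ℝ f q (Pi.single j 1)

/-- Covariant derivative of a covector field:
`L_{a|b} = ∂L_a/∂q^b − Γ^s_{ab} L_s`. -/
def covD1 {D : ℕ} (Γ : Conn D) (L : Vec D → Fin D → ℝ) (q : Vec D) (a b : Fin D) : ℝ :=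
  pd b (fun p => L p a) q - ∑ s, Γ q s a b * L q s

/-- Generalized Killing vector: `L_{(a|b)} = 0`. -/
def IsGenKV {D : ℕ} (Γ : Conn D) (L : Vec D → Fin D → ℝ) : Prop :=
  ∀ q a b, covD1 Γ L q a b + covD1 Γ L q b a = 0

/-- `q, v` solve `q̈^a = -Γ^a_{bc}(q) q̇^b q̇^c - Q^a(q)` on the set `s ⊆ ℝ`. -/
def IsSolutionOn {D : ℕ} (Γ : Conn D) (Q : Vec D → Fin D → ℝ)
    (s : Set ℝ) (q v : ℝ → Vec D) : Prop :=
  ∀ t ∈ s, ∀ a : Fin D,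
    HasDerivAt (fun τ => q τ a) (v t a) t ∧
    HasDerivAt (fun τ => v τ a)
      (-(∑ b, ∑ c, Γ (q t) a b c * v t b * v t c) - Q (q t) a) t

/-- `I(t,q,q̇)` is a first integral of the system: it is constant along every
(C²) solution defined on an open interval. -/
def FirstIntegral {D : ℕ} (Γ : Conn D) (Q : Vec D → Fin D → ℝ)
    (I : ℝ → Vec D → Vec D → ℝ) : Prop :=
  ∀ (a b : ℝ) (q v : ℝ → Vec D), IsSolutionOn Γ Q (Set.Ioo a b) q v →
    ∀ t₁ ∈ Set.Ioo a b, ∀ t₂ ∈ Set.Ioo a b,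
      I t₁ (q t₁) (v t₁) = I t₂ (q t₂) (v t₂)

open Finset

theorem fderiv_apply_eq_sum_pd {D : ℕ} (f : Vec D → ℝ) (p u : Vec D) :
    fderiv ℝ f p u = ∑ b, u b * pd b f p := by
  conv_lhs => rw [← univ_sum_single u]
  refine (map_sum _ _ _).trans (sum_congr rfl fun b _ => ?_)
  rw [pd, ← smul_eq_mul, ← map_smul, ← Pi.single_smul, smul_eq_mul, mul_one]

theorem hasDerivAt_comp_eq_sum_pd {D : ℕ} {f : Vec D → ℝ} {γ : ℝ → Vec D} {u : Vec D} {t : ℝ}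
    (hf : DifferentiableAt ℝ f (γ t)) (hγ : HasDerivAt γ u t) :
    HasDerivAt (fun τ => f (γ τ)) (∑ b, u b * pd b f (γ t)) t := by
  rw [← fderiv_apply_eq_sum_pd]
  exact hf.hasFDerivAt.comp_hasDerivAt t hγ

theorem sum_sum_mul_mul_eq_of_add_swap_eq {ι 𝕜 : Type*} [Fintype ι] [Field 𝕜] [CharZero 𝕜]
    {A G : ι → ι → 𝕜} (h : ∀ a b, A a b + A b a = G a b + G b a) (u : ι → 𝕜) :
    ∑ a, ∑ b, A a b * u a * u b = ∑ a, ∑ b, G a b * u a * u b := by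
  have hsymm : ∀ M : ι → ι → 𝕜, 2 * ∑ a, ∑ b, M a b * u a * u b =
      ∑ a, ∑ b, (M a b + M b a) * u a * u b := fun M => by
    have hswap : ∑ a, ∑ b, M b a * u a * u b = ∑ a, ∑ b, M a b * u a * u b := by
      rw [sum_comm]; exact sum_congr rfl fun _ _ => sum_congr rfl fun _ _ => by ring
    simp only [add_mul, sum_add_distrib, hswap]; ring
  have := hsymm A
  simp only [h, ← hsymm G] at this
  exact mul_left_cancel₀ two_ne_zero this

theorem IsGenKV.sum_sum_pd_mul_mul {D : ℕ} {Γ : Conn D} {L : Vec D → Fin D → ℝ}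
    (hKV : IsGenKV Γ L) (p u : Vec D) :
    ∑ a, ∑ b, pd b (fun x => L x a) p * u a * u b =
      ∑ a, L p a * ∑ b, ∑ c, Γ p a b c * u b * u c := by
  have h : ∀ a b, pd b (fun x => L x a) p + pd a (fun x => L x b) p =
      (∑ s, Γ p s a b * L p s) + ∑ s, Γ p s b a * L p s := fun a b => by
    have := hKV p a b; simp only [covD1] at this; linarith
  rw [sum_sum_mul_mul_eq_of_add_swap_eq h]
  simp only [sum_mul, mul_sum]
  calc ∑ a, ∑ b, ∑ s, Γ p s a b * L p s * u a * u b
      = ∑ s, ∑ a, ∑ b, Γ p s a b * L p s * u a * u b := by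
        conv_lhs => enter [2, a]; rw [sum_comm]
        rw [sum_comm]
    _ = _ := sum_congr rfl fun _ _ => sum_congr rfl fun _ _ => sum_congr rfl fun _ _ => by ring

theorem hasDerivAt_ladder_eq_zero {ℓ : ℕ} {g h : ℕ → ℝ → ℝ} {s₀ t : ℝ}
    (hg : ∀ N ≤ ℓ, HasDerivAt (g N) (-h N t) t)
    (hh : ∀ N < ℓ, HasDerivAt (h N) (-(2 * (2 * N + 1) * (N + 1)) * g (N + 1) t) t)
    (hs₀ : h ℓ t = s₀) :
    HasDerivAt (fun τ => (∑ N ∈ range (ℓ + 1), τ ^ (2 * N) * g N τ)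
      + s₀ * τ ^ (2 * ℓ + 1) / ((2 * ℓ + 1 : ℕ) : ℝ)
      + ∑ N ∈ range ℓ, h N τ * τ ^ (2 * N + 1) / ((2 * N + 1 : ℕ) : ℝ)) 0 t := by
  have block : ∀ N < ℓ, HasDerivAt
      (fun τ => τ ^ (2 * (N + 1)) * g (N + 1) τ + h N τ * τ ^ (2 * N + 1) / ((2 * N + 1 : ℕ) : ℝ))
      (t ^ (2 * N) * h N t - t ^ (2 * (N + 1)) * h (N + 1) t) t := fun N hN => by
    refine (((hasDerivAt_pow _ t).mul (hg (N + 1) hN)).add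
      (((hh N hN).mul (hasDerivAt_pow _ t)).div_const _)).congr_deriv ?_
    rw [show 2 * (N + 1) - 1 = 2 * N + 1 by omega, Nat.add_sub_cancel]
    field_simp
    push_cast
    ring
  have split : (fun τ => (∑ N ∈ range (ℓ + 1), τ ^ (2 * N) * g N τ)
      + s₀ * τ ^ (2 * ℓ + 1) / ((2 * ℓ + 1 : ℕ) : ℝ)
      + ∑ N ∈ range ℓ, h N τ * τ ^ (2 * N + 1) / ((2 * N + 1 : ℕ) : ℝ)) =
      fun τ => g 0 τ + (∑ N ∈ range ℓ, (τ ^ (2 * (N + 1)) * g (N + 1) τ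
        + h N τ * τ ^ (2 * N + 1) / ((2 * N + 1 : ℕ) : ℝ)))
        + s₀ * τ ^ (2 * ℓ + 1) / ((2 * ℓ + 1 : ℕ) : ℝ) := by
    funext τ
    rw [sum_range_succ', sum_add_distrib]
    ring
  rw [split]
  refine (((hg 0 ℓ.zero_le).add (HasDerivAt.fun_sum fun N hN => block N (mem_range.1 hN))).add
    (((hasDerivAt_pow _ t).const_mul s₀).div_const _)).congr_deriv ?_
  rw [sum_range_sub' (fun N => t ^ (2 * N) * h N t), hs₀, Nat.add_sub_cancel]
  field_simp
  ring

namespace IsSolutionOn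

variable {D : ℕ} {Γ : Conn D} {Q : Vec D → Fin D → ℝ} {s : Set ℝ} {q v : ℝ → Vec D} {t : ℝ}

theorem hasDerivAt_comp (hsol : IsSolutionOn Γ Q s q v) (ht : t ∈ s) {f : Vec D → ℝ}
    (hf : DifferentiableAt ℝ f (q t)) :
    HasDerivAt (fun τ => f (q τ)) (∑ b, v t b * pd b f (q t)) t :=
  hasDerivAt_comp_eq_sum_pd hf (hasDerivAt_pi.2 fun a => (hsol t ht a).1)

theorem hasDerivAt_sum_mul_of_isGenKV (hsol : IsSolutionOn Γ Q s q v) (ht : t ∈ s)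
    {L : Vec D → Fin D → ℝ} (hKV : IsGenKV Γ L)
    (hL : ∀ a, DifferentiableAt ℝ (fun p => L p a) (q t)) :
    HasDerivAt (fun τ => ∑ a, L (q τ) a * v τ a) (-∑ a, L (q t) a * Q (q t) a) t := by
  refine (HasDerivAt.fun_sum fun a _ =>
    (hsol.hasDerivAt_comp ht (hL a)).mul (hsol t ht a).2).congr_deriv ?_
  have hquad : ∑ a, ∑ b, v t b * pd b (fun p => L p a) (q t) * v t a =
      ∑ a, L (q t) a * ∑ b, ∑ c, Γ (q t) a b c * v t b * v t c := by
    rw [← hKV.sum_sum_pd_mul_mul]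
    exact sum_congr rfl fun _ _ => sum_congr rfl fun _ _ => by ring
  simp only [mul_sub, mul_neg, sum_sub_distrib, sum_add_distrib, sum_neg_distrib, sum_mul, hquad]
  ring

theorem hasDerivAt_comp_of_pd_eq_mul (hsol : IsSolutionOn Γ Q s q v) (ht : t ∈ s)
    {f : Vec D → ℝ} {P : Vec D → Fin D → ℝ} {c : ℝ} (hf : DifferentiableAt ℝ f (q t))
    (hpd : ∀ a, pd a f (q t) = c * P (q t) a) :
    HasDerivAt (fun τ => f (q τ)) (c * ∑ a, P (q t) a * v t a) t := by
  refine (hsol.hasDerivAt_comp ht hf).congr_deriv ?_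
  simp only [hpd, mul_sum]
  exact sum_congr rfl fun _ _ => by ring

end IsSolutionOn

/-- `L j` represents the vector `L_{(j)a}`; only the even-indexed members `L (2N)`, `N = 0,…,ℓ`,
occur. -/
theorem stmt6_general {D : ℕ} (ℓ : ℕ)
    (Γ : Conn D) (Q : Vec D → Fin D → ℝ)
    (hQ : ∀ a, ContDiff ℝ (⊤ : ℕ∞) fun q => Q q a)
    (L : ℕ → Vec D → Fin D → ℝ) (s₀ : ℝ)
    (hLsm : ∀ N, N ≤ ℓ → ∀ a, ContDiff ℝ (⊤ : ℕ∞) fun q => L (2 * N) q a)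
    -- the `L_{(2N)a}`, `N = 0,…,ℓ`, are generalized Killing vectors
    (hKV : ∀ N, N ≤ ℓ → IsGenKV Γ (L (2 * N)))
    -- `(L_{(2k)b}Q^b)_{,a} = −2(2k+1)(k+1) L_{(2k+2)a}`, `k = 0,…,ℓ−1` (for `ℓ > 0`)
    (hc : ∀ k, k + 1 ≤ ℓ → ∀ q (a : Fin D),
      pd a (fun p => ∑ b, L (2 * k) p b * Q p b) q =
        -(2 * (2 * (k : ℝ) + 1) * ((k : ℝ) + 1)) * L (2 * k + 2) q a)
    -- `L_{(2ℓ)a}Q^a = s₀` is a constant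
    (hs₀ : ∀ q, ∑ a, L (2 * ℓ) q a * Q q a = s₀) :
    FirstIntegral Γ Q (fun t q v =>
      (∑ N ∈ Finset.range (ℓ + 1), t ^ (2 * N) * ∑ a, L (2 * N) q a * v a)
      + s₀ * t ^ (2 * ℓ + 1) / ((2 * ℓ + 1 : ℕ) : ℝ)
      + (∑ N ∈ Finset.range ℓ,
          (∑ a, L (2 * N) q a * Q q a) * t ^ (2 * N + 1) / ((2 * N + 1 : ℕ) : ℝ))) := by
  intro a b q v hsol t₁ ht₁ t₂ ht₂
  have hI := fun t (ht : t ∈ Set.Ioo a b) => hasDerivAt_ladder_eq_zero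
    (g := fun N τ => ∑ i, L (2 * N) (q τ) i * v τ i)
    (h := fun N τ => ∑ i, L (2 * N) (q τ) i * Q (q τ) i)
    (fun N hN => hsol.hasDerivAt_sum_mul_of_isGenKV ht (hKV N hN)
      fun i => (hLsm N hN i).differentiable (by simp) _)
    (fun k hk => hsol.hasDerivAt_comp_of_pd_eq_mul ht
      ((ContDiff.sum fun i _ => (hLsm k hk.le i).mul (hQ i)).differentiable (by simp) _)
      (hc k hk (q t)))
    (hs₀ (q t))
  exact isOpen_Ioo.is_const_of_deriv_eq_zero isPreconnected_Ioo
    (fun t ht => (hI t ht).differentiableAt.differentiableWithinAt)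
    (fun t ht => (hI t ht).deriv) ht₁ ht₂

/-- Proposition: LFI 1.2. `L j` represents the vector `L_{(j)a}`;
only the even-indexed members `L (2N)`, `N = 0,…,ℓ`, occur. -/
theorem stmt6 {D : ℕ} (ℓ : ℕ)
    (Γ : Conn D) (Q : Vec D → Fin D → ℝ)
    (hΓsym : ∀ q a b c, Γ q a b c = Γ q a c b)
    (hΓ : ∀ a b c, ContDiff ℝ (⊤ : ℕ∞) fun q => Γ q a b c)
    (hQ : ∀ a, ContDiff ℝ (⊤ : ℕ∞) fun q => Q q a)
    (L : ℕ → Vec D → Fin D → ℝ) (s₀ : ℝ)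
    (hLsm : ∀ N, N ≤ ℓ → ∀ a, ContDiff ℝ (⊤ : ℕ∞) fun q => L (2 * N) q a)
    -- the `L_{(2N)a}`, `N = 0,…,ℓ`, are generalized Killing vectors
    (hKV : ∀ N, N ≤ ℓ → IsGenKV Γ (L (2 * N)))
    -- `(L_{(2k)b}Q^b)_{,a} = −2(2k+1)(k+1) L_{(2k+2)a}`, `k = 0,…,ℓ−1` (for `ℓ > 0`)
    (hc : ∀ k, k + 1 ≤ ℓ → ∀ q (a : Fin D),
      pd a (fun p => ∑ b, L (2 * k) p b * Q p b) q =
        -(2 * (2 * (k : ℝ) + 1) * ((k : ℝ) + 1)) * L (2 * k + 2) q a)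
    -- `L_{(2ℓ)a}Q^a = s₀` is a constant
    (hs₀ : ∀ q, ∑ a, L (2 * ℓ) q a * Q q a = s₀) :
    FirstIntegral Γ Q (fun t q v =>
      (∑ N ∈ Finset.range (ℓ + 1), t ^ (2 * N) * ∑ a, L (2 * N) q a * v a)
      + s₀ * t ^ (2 * ℓ + 1) / ((2 * ℓ + 1 : ℕ) : ℝ)
      + (∑ N ∈ Finset.range ℓ,
          (∑ a, L (2 * N) q a * Q q a) * t ^ (2 * N + 1) / ((2 * N + 1 : ℕ) : ℝ))) :=
  stmt6_general ℓ Γ Q hQ L s₀ hLsm hKV hc hs₀
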